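/- arXiv:1908.03415 — 7 statements merged into one kernel-verified Lean document; each statement's English description precedes it below -/
import Mathlib

section
/- If a nonempty homogeneous topological space X (i.e., for any two points x, y of X there is a homeomorphism of X onto itself taking x to y) is not a Baire space, then X is of the first category in itself (i.e., X is a meager subset of itself). -/
/-!
Failure of the Baire property produces a nonempty open meagre set, and homogeneity moves it
around every point, so `X` is locally meagre. By Banach's category theorem a locally meagre
space is meagre: take a maximal pairwise disjoint family of open meagre sets. Its union `G`
is dense by maximality, so `Gᶜ` is nowhere dense; and `G` is meagre, because on pairwise
disjoint open sets the `n`-th nowhere dense pieces of all members glue to a nowhere dense set.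
-/

open Set Topology Function

lemma exists_maximal_pairwiseDisjoint_subset {α : Type*} (P : Set (Set α)) :
    ∃ 𝒜, Maximal (fun 𝒜 : Set (Set α) ↦ 𝒜 ⊆ P ∧ 𝒜.PairwiseDisjoint id) 𝒜 :=
  zorn_subset _ fun c hcP hc ↦
    ⟨⋃₀ c, ⟨sUnion_subset fun _ h𝒜 ↦ (hcP h𝒜).1,
      (hc.pairwiseDisjoint_sUnion id).2 fun _ h𝒜 ↦ (hcP h𝒜).2⟩,
      fun _ ↦ subset_sUnion_of_mem⟩

section

variable {X : Type*} [TopologicalSpace X]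

lemma IsMeagre.exists_isNowhereDense_eq_iUnion {s : Set X} (hs : IsMeagre s) :
    ∃ N : ℕ → Set X, (∀ n, IsNowhereDense (N n) ∧ N n ⊆ s) ∧ s = ⋃ n, N n := by
  obtain ⟨S, hS, hSc, hsS⟩ := isMeagre_iff_countable_union_isNowhereDense.mp hs
  -- `∅` is added so that the family is nonempty and can be enumerated by `ℕ`.
  obtain ⟨f, hf⟩ := (hSc.insert ∅).exists_eq_range (insert_nonempty _ _)
  have hfS : ∀ n, f n ∈ insert ∅ S := fun n ↦ hf ▸ mem_range_self n
  refine ⟨fun n ↦ f n ∩ s, fun n ↦ ⟨?_, inter_subset_right⟩, ?_⟩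
  · rcases hfS n with h | h
    · simp [h]
    · exact (hS _ h).mono inter_subset_left
  · refine Subset.antisymm (fun x hx ↦ ?_) (iUnion_subset fun _ ↦ inter_subset_right)
    obtain ⟨t, ht, hxt⟩ := hsS hx
    obtain ⟨n, rfl⟩ : t ∈ range f := hf ▸ mem_insert_of_mem _ ht
    exact mem_iUnion.mpr ⟨n, hxt, hx⟩

lemma isNowhereDense_iUnion_of_pairwise_disjoint {ι : Type*} {U N : ι → Set X}
    (hU : ∀ i, IsOpen (U i)) (hdisj : Pairwise (Disjoint on U))
    (hN : ∀ i, IsNowhereDense (N i)) (hNU : ∀ i, N i ⊆ U i) :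
    IsNowhereDense (⋃ i, N i) := by
  rw [isNowhereDense_iff_forall_notMem_nhds]
  rintro x hx hnhds
  obtain ⟨i, hxi⟩ := mem_iUnion.mp hx
  have hlocal : U i ∩ ⋃ j, N j ⊆ N i := by
    rintro y ⟨hyU, hy⟩
    obtain ⟨j, hyj⟩ := mem_iUnion.mp hy
    obtain rfl : i = j := hdisj.eq <| not_disjoint_iff.mpr ⟨y, hyU, hNU j hyj⟩
    exact hyj
  have : closure (N i) ∈ 𝓝 x :=
    Filter.mem_of_superset (Filter.inter_mem ((hU i).mem_nhds (hNU i hxi)) hnhds)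
      ((hU i).inter_closure.trans (closure_mono hlocal))
  exact (isNowhereDense_iff_forall_notMem_nhds.mp (hN i)) x hxi this

lemma isMeagre_iUnion_of_pairwise_disjoint {ι : Type*} {U : ι → Set X}
    (hU : ∀ i, IsOpen (U i)) (hdisj : Pairwise (Disjoint on U)) (hm : ∀ i, IsMeagre (U i)) :
    IsMeagre (⋃ i, U i) := by
  choose N hN hUN using fun i ↦ (hm i).exists_isNowhereDense_eq_iUnion
  have hN' : ∀ n, IsNowhereDense (⋃ i, N i n) := fun n ↦
    isNowhereDense_iUnion_of_pairwise_disjoint hU hdisj (fun i ↦ (hN i n).1) fun i ↦ (hN i n).2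
  rw [iUnion_congr hUN, iUnion_comm]
  exact isMeagre_iUnion fun n ↦ (hN' n).isMeagre

theorem isMeagre_univ_of_forall_exists_mem_nhds_isMeagre
    (h : ∀ x : X, ∃ U ∈ 𝓝 x, IsMeagre U) : IsMeagre (univ : Set X) := by
  obtain ⟨𝒜, h𝒜⟩ := exists_maximal_pairwiseDisjoint_subset {U : Set X | IsOpen U ∧ IsMeagre U}
  have hopen : IsOpen (⋃₀ 𝒜) := isOpen_sUnion fun V hV ↦ (h𝒜.prop.1 hV).1
  have hmeagre : IsMeagre (⋃₀ 𝒜) := by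
    rw [sUnion_eq_iUnion]
    exact isMeagre_iUnion_of_pairwise_disjoint (fun V ↦ (h𝒜.prop.1 V.2).1)
      (h𝒜.prop.2.subtype _ _) fun V ↦ (h𝒜.prop.1 V.2).2
  have hdense : Dense (⋃₀ 𝒜) := by
    refine dense_iff_inter_open.mpr fun W hW ⟨x, hxW⟩ ↦ not_disjoint_iff_nonempty_inter.mp
      fun hdisj ↦ ?_
    obtain ⟨U, hU, hUm⟩ := h x
    set W' := W ∩ interior U
    have hxW' : x ∈ W' := ⟨hxW, mem_interior_iff_mem_nhds.mpr hU⟩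
    have hW'P : IsOpen W' ∧ IsMeagre W' :=
      ⟨hW.inter isOpen_interior, hUm.mono (inter_subset_right.trans interior_subset)⟩
    have hW'disj : Disjoint W' (⋃₀ 𝒜) := hdisj.mono_left inter_subset_left
    have hW'𝒜 : W' ∈ 𝒜 := h𝒜.mem_of_prop_insert ⟨insert_subset hW'P h𝒜.prop.1,
      h𝒜.prop.2.insert fun V hV _ ↦ hW'disj.mono_right (subset_sUnion_of_mem hV)⟩
    exact hW'disj.ne_of_mem hxW' (subset_sUnion_of_mem hW'𝒜 hxW') rfl
  have hcompl : IsNowhereDense (⋃₀ 𝒜)ᶜ :=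
    (isClosed_isNowhereDense_iff_compl.mpr (by simpa using And.intro hopen hdense)).2
  simpa using hmeagre.union hcompl.isMeagre

lemma baireSpace_of_forall_isOpen_not_isMeagre
    (h : ∀ U : Set X, IsOpen U → U.Nonempty → ¬IsMeagre U) : BaireSpace X where
  baire_property f hopen hdense := by
    have hres : (⋂ n, f n) ∈ residual X :=
      countable_iInter_mem.mpr fun n ↦ residual_of_dense_open (hopen n) (hdense n)
    refine dense_iff_inter_open.mpr fun U hU hne ↦ not_disjoint_iff_nonempty_inter.mp
      fun hdisj ↦ h U hU hne ?_
    exact IsMeagre.mono hdisj.subset_compl_right (by rwa [IsMeagre, compl_compl])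

end

theorem stmt_0_general {X : Type*} [TopologicalSpace X]
    (hhom : ∀ x y : X, ∃ h : X ≃ₜ X, h x = y)
    (hnotBaire : ¬ BaireSpace X) :
    IsMeagre (Set.univ : Set X) := by
  obtain ⟨U, hU, ⟨u, hu⟩, hUm⟩ : ∃ U : Set X, IsOpen U ∧ U.Nonempty ∧ IsMeagre U := by
    by_contra! hall
    exact hnotBaire (baireSpace_of_forall_isOpen_not_isMeagre hall)
  refine isMeagre_univ_of_forall_exists_mem_nhds_isMeagre fun x ↦ ?_
  obtain ⟨h, rfl⟩ := hhom u x
  exact ⟨h '' U, h.isOpenMap U hU |>.mem_nhds (mem_image_of_mem h hu),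
    h.isInducing.isMeagre_image hUm⟩

/-- If a nonempty homogeneous topological space `X` (for any two points there is a
self-homeomorphism taking one to the other) is not a Baire space, then `X` is of the
first category in itself, i.e. `X` is a meager subset of itself. -/
theorem stmt_0 {X : Type*} [TopologicalSpace X] [Nonempty X]
    (hhom : ∀ x y : X, ∃ h : X ≃ₜ X, h x = y)
    (hnotBaire : ¬ BaireSpace X) :
    IsMeagre (Set.univ : Set X) :=
  stmt_0_general hhom hnotBaire
end

section
/- The subgroup G = {x ∈ (ℤ/2)^ℕ : supp(x) is thin} is of the first category (meager) in the compact group (ℤ/2)^ℕ; consequently, G is of the first category in itself. -/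
/-!
A thin support meets `{0, …, k-1}` in at most `k/2` points for all large `k`, so `G` lies in
the countable union of the closed sets `sparseFrom N`. Each `sparseFrom N` has dense complement,
because any prefix of a sequence can be continued by a block of ones long enough to fill more
than half of an initial segment. Finitely supported sequences are thin and dense, so `G` is a
dense meagre set, and a meagre set stays meagre when traced on a dense subspace.
-/

open Filter Topology Set

/-- `ℤ/2` carries the discrete topology. -/
instance : TopologicalSpace (ZMod 2) := ⊥

instance : DiscreteTopology (ZMod 2) := ⟨rfl⟩

/-- A set of naturals is *thin* if `|A ∩ {0,…,k-1}|/k → 0` as `k → ∞`. -/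
def Thin (A : Set ℕ) : Prop :=
  Tendsto (fun k : ℕ => ((A ∩ Set.Iio k).ncard : ℝ) / k) atTop (𝓝 0)

/-- The support of an element of `(ℤ/2)^ℕ`. -/
def supp (x : ℕ → ZMod 2) : Set ℕ := {n : ℕ | x n ≠ 0}

lemma IsNowhereDense.preimage_val {X : Type*} [TopologicalSpace X] {A s : Set X} (hA : Dense A)
    (hs : IsNowhereDense s) : IsNowhereDense ((↑) ⁻¹' s : Set A) := by
  rw [IsNowhereDense, interior_eq_empty_iff_dense_compl] at hs ⊢
  have hU : Dense ((closure s)ᶜ ∩ A) := hs.inter_of_isOpen_left hA isClosed_closure.isOpen_compl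
  refine (Subtype.dense_iff.2 ?_).mono
    (compl_subset_compl.2 (continuous_subtype_val.closure_preimage_subset s))
  rw [← preimage_compl, image_preimage_eq_inter_range, Subtype.range_coe, hU.closure_eq]
  exact subset_univ _

lemma IsMeagre.preimage_val {X : Type*} [TopologicalSpace X] {A s : Set X} (hA : Dense A)
    (hs : IsMeagre s) : IsMeagre ((↑) ⁻¹' s : Set A) := by
  obtain ⟨S, hS, hSc, hsS⟩ := isMeagre_iff_countable_union_isNowhereDense.1 hs
  refine isMeagre_iff_countable_union_isNowhereDense.2
    ⟨preimage (↑) '' S, forall_mem_image.2 fun t ht => (hS t ht).preimage_val hA,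
      hSc.image _, ?_⟩
  rw [sUnion_image, ← preimage_sUnion]
  exact preimage_mono hsS

section Splice

variable {X : ℕ → Type*} [∀ i, TopologicalSpace (X i)]

def splice (x z : ∀ i, X i) (n : ℕ) : ∀ i, X i := fun i => if i < n then x i else z i

lemma tendsto_splice_atTop (x z : ∀ i, X i) : Tendsto (splice x z) atTop (𝓝 x) := by
  refine tendsto_pi_nhds.2 fun i => tendsto_const_nhds.congr' ?_
  filter_upwards [eventually_gt_atTop i] with n hn
  simp [splice, hn]

lemma dense_of_forall_splice_mem {B : Set (∀ i, X i)} (z : ∀ i, X i)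
    (h : ∀ x n, splice x z n ∈ B) : Dense B :=
  fun x => mem_closure_of_tendsto (tendsto_splice_atTop x z) (.of_forall (h x))

end Splice

lemma thin_of_finite {A : Set ℕ} (hA : A.Finite) : Thin A := by
  refine squeeze_zero (fun k => by positivity) (fun k => ?_)
    (tendsto_const_div_atTop_nhds_zero_nat (A.ncard : ℝ))
  gcongr
  exact inter_subset_left

lemma dense_setOf_thin_supp : Dense {x | Thin (supp x)} :=
  dense_of_forall_splice_mem 0 fun x n => thin_of_finite <|
    (finite_Iio n).subset fun i hi =>
      by_contra fun hin => hi (by simp [splice, show ¬i < n from hin])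

noncomputable def suppCount (x : ℕ → ZMod 2) (k : ℕ) : ℕ :=
  ((Finset.range k).filter (x · ≠ 0)).card

lemma ncard_supp_inter_Iio (x : ℕ → ZMod 2) (k : ℕ) :
    (supp x ∩ Iio k).ncard = suppCount x k := by
  rw [suppCount, ← ncard_coe_finset]
  congr 1
  ext n
  simp [supp, and_comm]

lemma continuous_suppCount (k : ℕ) : Continuous (suppCount · k) := by
  simp only [suppCount, Finset.card_filter]
  exact continuous_finsetSum _ fun n _ =>
    (continuous_of_discreteTopology (f := fun v : ZMod 2 => if v ≠ 0 then 1 else 0)).comp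
      (continuous_apply n)

def sparseFrom (N : ℕ) : Set (ℕ → ZMod 2) := {x | ∀ k ≥ N, 2 * suppCount x k ≤ k}

lemma isClosed_sparseFrom (N : ℕ) : IsClosed (sparseFrom N) := by
  simp only [sparseFrom, ofPred_forall]
  exact isClosed_biInter fun k _ =>
    (isClosed_discrete {m | 2 * m ≤ k}).preimage (continuous_suppCount k)

lemma Thin.exists_mem_sparseFrom {x : ℕ → ZMod 2} (hx : Thin (supp x)) :
    ∃ N, x ∈ sparseFrom N := by
  obtain ⟨N, hN⟩ := ((hx.eventually (gt_mem_nhds one_half_pos)).and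
    (eventually_ge_atTop 1)).exists_forall_of_atTop
  refine ⟨N, fun k hk => ?_⟩
  obtain ⟨hlt, hk1⟩ := hN k hk
  rw [ncard_supp_inter_Iio, div_lt_iff₀ (by positivity)] at hlt
  exact_mod_cast (by linarith : (2 * suppCount x k : ℝ) ≤ k)

lemma splice_one_notMem_sparseFrom (x : ℕ → ZMod 2) (n N : ℕ) :
    splice x 1 n ∉ sparseFrom N := by
  set k := max N (2 * n + 1)
  have hcount : k - n ≤ suppCount (splice x 1 n) k := by
    rw [← Nat.card_Ico]
    refine Finset.card_le_card fun i hi => ?_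
    rw [Finset.mem_Ico] at hi
    simp [splice, hi.2, not_lt.2 hi.1]
  intro hx
  have hsparse := hx k (le_max_left _ _)
  have hk : 2 * n + 1 ≤ k := le_max_right _ _
  omega

lemma isNowhereDense_sparseFrom (N : ℕ) : IsNowhereDense (sparseFrom N) :=
  (isClosed_sparseFrom N).isNowhereDense_iff.2 <| interior_eq_empty_iff_dense_compl.2 <|
    dense_of_forall_splice_mem 1 fun x n => splice_one_notMem_sparseFrom x n N

/-- The subgroup `G = {x ∈ (ℤ/2)^ℕ : supp x is thin}` is of the first category (meager)
in the compact group `(ℤ/2)^ℕ`; consequently `G` (with the subspace topology) is of the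
first category in itself. -/
theorem stmt_3 :
    IsMeagre {x : ℕ → ZMod 2 | Thin (supp x)} ∧
    IsMeagre (Set.univ : Set {x : ℕ → ZMod 2 // Thin (supp x)}) := by
  have hG : IsMeagre {x : ℕ → ZMod 2 | Thin (supp x)} :=
    (isMeagre_iUnion fun N => (isNowhereDense_sparseFrom N).isMeagre).mono
      fun x hx => mem_iUnion.2 hx.exists_mem_sparseFrom
  refine ⟨hG, ?_⟩
  have hGG := hG.preimage_val dense_setOf_thin_supp
  rwa [Subtype.coe_preimage_self] at hGG
end

section
/- Let G = {x ∈ (ℤ/2)^ℕ : supp(x) is thin}, a dense subgroup of the compact group (ℤ/2)^ℕ with the subspace topology. Then the dual group G_p^∧ contains no nontrivial convergent sequences; equivalently, every sequence of characters of G that converges pointwise on G is eventually constant. -/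
open Filter Topology Set

lemma div_nat_le {a b : ℕ} (k : ℕ) (h : a ≤ b) : (a : ℝ) / k ≤ (b : ℝ) / k := by
  rcases Nat.eq_zero_or_pos k with rfl | hk
  · simp
  · exact div_le_div_of_nonneg_right (by exact_mod_cast h) (by positivity)

lemma thin_mono {A B : Set ℕ} (h : A ⊆ B) (hB : Thin B) : Thin A := by
  refine squeeze_zero (fun k => by positivity) (fun k => ?_) hB
  exact div_nat_le k (Set.ncard_le_ncard (Set.inter_subset_inter_left _ h)
    ((Set.finite_Iio k).subset Set.inter_subset_right))

lemma thin_union {A B : Set ℕ} (hA : Thin A) (hB : Thin B) : Thin (A ∪ B) := by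
  have hsum : Tendsto (fun k : ℕ => ((A ∩ Set.Iio k).ncard : ℝ) / k
      + ((B ∩ Set.Iio k).ncard : ℝ) / k) atTop (𝓝 0) := by
    simpa using hA.add hB
  refine squeeze_zero (fun k => by positivity) (fun k => ?_) hsum
  rw [← add_div]
  have hle : ((A ∪ B) ∩ Set.Iio k).ncard ≤ (A ∩ Set.Iio k).ncard + (B ∩ Set.Iio k).ncard := by
    rw [Set.union_inter_distrib_right]
    exact Set.ncard_union_le _ _
  calc ((A ∪ B) ∩ Set.Iio k).ncard / (k : ℝ)
      ≤ (((A ∩ Set.Iio k).ncard + (B ∩ Set.Iio k).ncard : ℕ) : ℝ) / k := div_nat_le k hle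
    _ = ((A ∩ Set.Iio k).ncard + (B ∩ Set.Iio k).ncard : ℝ) / k := by push_cast; ring_nf

lemma thin_empty : Thin (∅ : Set ℕ) := by
  have h : (fun k : ℕ => (((∅ : Set ℕ) ∩ Set.Iio k).ncard : ℝ) / k) = fun _ => 0 := by
    funext k; simp
  rw [Thin, h]
  exact tendsto_const_nhds

/-- The dense subgroup `G` of `(ℤ/2)^ℕ` consisting of the elements with thin support. -/
def thinAddSubgroup : AddSubgroup (ℕ → ZMod 2) where
  carrier := {x : ℕ → ZMod 2 | Thin (supp x)}
  zero_mem' := by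
    have h : supp (0 : ℕ → ZMod 2) = ∅ := by ext n; simp [supp]
    simpa [Set.mem_setOf_eq, h] using thin_empty
  add_mem' := by
    intro x y hx hy
    refine thin_mono ?_ (thin_union hx hy)
    intro n hn
    simp only [supp, Set.mem_setOf_eq, Pi.add_apply] at hn
    by_contra hc
    simp only [supp, Set.mem_union, Set.mem_setOf_eq, not_or, not_not] at hc
    exact hn (by rw [hc.1, hc.2, add_zero])
  neg_mem' := by
    intro x hx
    have h : supp (-x) = supp x := by ext n; simp [supp]
    simpa [Set.mem_setOf_eq, h] using hx

/-- The dual group of `G = thinAddSubgroup`: the continuous characters of `G`, viewed as a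
subspace of the product `Circle ^ G`, i.e. carrying the topology of pointwise convergence. -/
abbrev ThinDual : Type :=
  {χ : ↥thinAddSubgroup → Circle //
    Continuous χ ∧ ∀ x y : ↥thinAddSubgroup, χ (x + y) = χ x * χ y}

/-- A sequence is eventually constant if from some index on all its values coincide. -/
def EventuallyConstant {X : Type*} (f : ℕ → X) : Prop :=
  ∃ N : ℕ, ∀ n : ℕ, N ≤ n → f n = f N

lemma supp_indicator_one (A : Set ℕ) : supp (A.indicator 1) = A := by
  ext n
  by_cases hn : n ∈ A <;> simp [supp, hn]

lemma tendsto_natLog_two_add_one_div :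
    Tendsto (fun N : ℕ => ((Nat.log 2 N : ℝ) + 1) / N) atTop (𝓝 0) := by
  have hlog : Tendsto (fun N : ℕ => Real.log N / N) atTop (𝓝 0) := by
    have := Real.isLittleO_log_id_atTop.tendsto_div_nhds_zero.comp tendsto_natCast_atTop_atTop
    simpa only [Function.comp_def, id] using this
  have hbound : Tendsto (fun N : ℕ => (Real.log 2)⁻¹ * (Real.log N / N) + 1 / N)
      atTop (𝓝 0) := by
    simpa using (hlog.const_mul _).add tendsto_one_div_atTop_nhds_zero_nat
  refine squeeze_zero (fun N => by positivity) (fun N => ?_) hbound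
  calc ((Nat.log 2 N : ℝ) + 1) / N ≤ (Real.logb 2 N + 1) / N := by
        gcongr; exact Real.natLog_le_logb N 2
    _ = (Real.log 2)⁻¹ * (Real.log N / N) + 1 / N := by
        rw [Real.logb, add_div]; ring

lemma ncard_range_inter_Iio_le {i : ℕ → ℕ} (hi : ∀ k, 2 ^ k ≤ i k) (N : ℕ) :
    (range i ∩ Iio N).ncard ≤ Nat.log 2 N + 1 := by
  rcases Nat.eq_zero_or_pos N with rfl | hN
  · simp
  have hsub : range i ∩ Iio N ⊆ i '' Iic (Nat.log 2 N) := by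
    rintro _ ⟨⟨k, rfl⟩, hk⟩
    exact ⟨k, (Nat.le_log_iff_pow_le one_lt_two hN.ne').2 ((hi k).trans (le_of_lt hk)), rfl⟩
  calc (range i ∩ Iio N).ncard ≤ (i '' Iic (Nat.log 2 N)).ncard :=
        ncard_le_ncard hsub ((finite_Iic _).image i)
    _ ≤ (Iic (Nat.log 2 N)).ncard := ncard_image_le (finite_Iic _)
    _ = Nat.log 2 N + 1 := by rw [← Finset.coe_Iic, ncard_coe_finset, Nat.card_Iic]

lemma thin_range_of_two_pow_le {i : ℕ → ℕ} (hi : ∀ k, 2 ^ k ≤ i k) : Thin (range i) :=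
  squeeze_zero (fun N => by positivity)
    (fun N => div_le_div_of_nonneg_right (by exact_mod_cast ncard_range_inter_Iio_le hi N)
      (Nat.cast_nonneg N))
    tendsto_natLog_two_add_one_div

section Selection

variable {S : ℕ → Set ℕ}

lemma exists_nonempty_subset_Ioi (hloc : ∀ i, {n | i ∈ S n}.Finite)
    (hne : {n | (S n).Nonempty}.Infinite) (M : ℕ) :
    ∃ n, M < n ∧ (S n).Nonempty ∧ S n ⊆ Ioi M := by
  have hsmall : (⋃ i ∈ Iic M, {n | i ∈ S n}).Finite := (finite_Iic M).biUnion fun i _ => hloc i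
  obtain ⟨n, hn, hnot⟩ := (hne.sdiff (hsmall.union (finite_Iic M))).nonempty
  simp only [mem_union, mem_iUnion, mem_Iic, mem_ofPred_eq, not_or, not_exists, not_le] at hnot
  exact ⟨n, hnot.2, hn, fun j hj => lt_of_not_ge fun hjM => hnot.1 j hjM hj⟩

theorem exists_thin_frequently_inter_eq_singleton (hfin : ∀ n, (S n).Finite)
    (hloc : ∀ i, {n | i ∈ S n}.Finite) (hne : {n | (S n).Nonempty}.Infinite) :
    ∃ A, Thin A ∧ ∃ᶠ n in atTop, ∃ i, S n ∩ A = {i} := by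
  choose g hg_gt hg_ne hg_sub using exists_nonempty_subset_Ioi hloc hne
  choose b hb using fun n => (hfin n).bddAbove
  -- `M k` bounds everything chosen before stage `k`; doubling makes `iₖ ≥ 2ᵏ`.
  set M : ℕ → ℕ := fun k => (fun m => 2 * m + 1 + b (g m))^[k] 0
  have hM_succ : ∀ k, M (k + 1) = 2 * M k + 1 + b (g (M k)) :=
    fun k => Function.iterate_succ_apply' _ _ _
  have hM_mono : Monotone M := monotone_nat_of_le_succ fun k => by rw [hM_succ]; omega
  have hM_pow : ∀ k, 2 ^ k ≤ M k + 1 := by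
    intro k
    induction k with
    | zero => simp
    | succ k ih => rw [hM_succ, pow_succ]; omega
  set i : ℕ → ℕ := fun k => (hg_ne (M k)).some
  have hi_mem : ∀ k, i k ∈ S (g (M k)) := fun k => (hg_ne (M k)).some_mem
  have hi_gt : ∀ k, M k < i k := fun k => hg_sub _ (hi_mem k)
  have hS_lt : ∀ k, ∀ j ∈ S (g (M k)), j < M (k + 1) := fun k j hj => by
    have := hb (g (M k)) hj
    rw [hM_succ]; omega
  have hinter : ∀ k, S (g (M k)) ∩ range i = {i k} := by
    intro k
    ext j
    refine ⟨?_, fun hj => ⟨(mem_singleton_iff.1 hj) ▸ hi_mem k, k, (mem_singleton_iff.1 hj).symm⟩⟩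
    rintro ⟨hj, m, rfl⟩
    rcases lt_trichotomy m k with hmk | rfl | hkm
    · have := hS_lt m _ (hi_mem m)
      have := hM_mono (show m + 1 ≤ k by omega)
      have := hg_sub _ hj
      simp only [mem_Ioi] at this
      omega
    · rfl
    · have := hS_lt k _ hj
      have := hM_mono (show k + 1 ≤ m by omega)
      have := hi_gt m
      omega
  refine ⟨range i, thin_range_of_two_pow_le fun k => ?_, frequently_atTop.2 fun N => ?_⟩
  · have := hM_pow k
    have := hi_gt k
    omega
  · have := hM_pow N
    have := hg_gt (M N)
    have := Nat.lt_two_pow_self (n := N)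
    exact ⟨g (M N), by omega, i N, hinter N⟩

end Selection

lemma exists_finset_eqOn_subset_of_mem_nhds {ι : Type*} {X : ι → Type*}
    [∀ i, TopologicalSpace (X i)] {y : ∀ i, X i} {u : Set (∀ i, X i)} (hu : u ∈ 𝓝 y) :
    ∃ I : Finset ι, {z | ∀ i ∈ I, z i = y i} ⊆ u := by
  rw [nhds_pi, Filter.mem_pi'] at hu
  obtain ⟨I, t, ht, hsub⟩ := hu
  exact ⟨I, fun z hz => hsub fun i hi => (hz i hi).symm ▸ mem_of_mem_nhds (ht i)⟩

lemma Circle.eventually_eq_one_of_sq_eq_one : ∀ᶠ z in 𝓝 (1 : Circle), z ^ 2 = 1 → z = 1 := by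
  filter_upwards [continuous_subtype_val.continuousAt.eventually_ne
    (show ((1 : Circle) : ℂ) ≠ -1 by norm_num)] with z hz hsq
  refine Circle.coe_injective ((sq_eq_one_iff.1 ?_).resolve_right hz)
  simpa using congrArg ((↑) : Circle → ℂ) hsq

lemma eventually_eq_one_of_tendsto_of_sq_eq_one {α : Type*} {l : Filter α} {u : α → Circle}
    (hsq : ∀ n, u n ^ 2 = 1) (hu : Tendsto u l (𝓝 1)) : ∀ᶠ n in l, u n = 1 :=
  (hu.eventually Circle.eventually_eq_one_of_sq_eq_one).mono fun n h => h (hsq n)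

def thinSingle (i : ℕ) : thinAddSubgroup :=
  ⟨Pi.single i 1, thin_mono (fun _ hj => by_contra fun hji => hj (Pi.single_eq_of_ne hji 1))
    (thin_of_finite (finite_singleton i))⟩

noncomputable def thinIndicator {A : Set ℕ} (hA : Thin A) : thinAddSubgroup :=
  ⟨A.indicator 1, show Thin (supp _) by rwa [supp_indicator_one]⟩

namespace AddChar

variable (ψ : AddChar thinAddSubgroup Circle)

lemma sq_eq_one_of_thin (x : thinAddSubgroup) : ψ x ^ 2 = 1 := by
  have hx : 2 • x = 0 :=
    Subtype.ext (funext fun _ => by simp [two_nsmul, CharTwo.add_self_eq_zero])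
  rw [← map_nsmul_eq_pow, hx, map_zero_eq_one]

lemma exists_finset_of_continuous (hψ : Continuous ψ) :
    ∃ F : Finset ℕ, ∀ x : thinAddSubgroup, (∀ i ∈ F, (x : ℕ → ZMod 2) i = 0) → ψ x = 1 := by
  have hU : ψ ⁻¹' {z | z ^ 2 = 1 → z = 1} ∈ 𝓝 0 :=
    hψ.continuousAt.preimage_mem_nhds (by
      rw [map_zero_eq_one]; exact Circle.eventually_eq_one_of_sq_eq_one)
  obtain ⟨u, hu, hsub⟩ := (mem_nhds_subtype _ _ _).1 hU
  obtain ⟨F, hF⟩ := exists_finset_eqOn_subset_of_mem_nhds hu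
  exact ⟨F, fun x hx => hsub (hF hx) (ψ.sq_eq_one_of_thin x)⟩

lemma map_eq_prod_map_thinSingle {F : Finset ℕ}
    (hF : ∀ x : thinAddSubgroup, (∀ i ∈ F, (x : ℕ → ZMod 2) i = 0) → ψ x = 1)
    (x : thinAddSubgroup) :
    ψ x = ∏ i ∈ F with (x : ℕ → ZMod 2) i ≠ 0, ψ (thinSingle i) := by
  set y := ∑ i ∈ F with (x : ℕ → ZMod 2) i ≠ 0, thinSingle i
  have hy : ∀ j ∈ F, ((x - y : thinAddSubgroup) : ℕ → ZMod 2) j = 0 := by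
    intro j hj
    have : ∀ z : ZMod 2, z - (if z ≠ 0 then 1 else 0) = 0 := by decide
    simpa [y, AddSubgroup.val_finsetSum, Finset.sum_apply, thinSingle, Pi.single_apply, hj]
      using this _
  calc ψ x = ψ (y + (x - y)) := by rw [add_sub_cancel]
    _ = ψ y := by rw [map_add_eq_mul, hF _ hy, mul_one]
    _ = _ := by
      show ψ.toMonoidHom (Multiplicative.ofAdd y) = _
      rw [ofAdd_sum, map_prod]
      rfl

def thinSupport : Set ℕ := {i | ψ (thinSingle i) ≠ 1}

variable {ψ}

lemma thinSupport_subset {F : Finset ℕ}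
    (hF : ∀ x : thinAddSubgroup, (∀ i ∈ F, (x : ℕ → ZMod 2) i = 0) → ψ x = 1) :
    ψ.thinSupport ⊆ F :=
  fun _ hi => by_contra fun hiF =>
    hi (hF _ fun _ hj => Pi.single_eq_of_ne (ne_of_mem_of_not_mem hj hiF) 1)

lemma finite_thinSupport (hψ : Continuous ψ) : ψ.thinSupport.Finite := by
  obtain ⟨F, hF⟩ := ψ.exists_finset_of_continuous hψ
  exact F.finite_toSet.subset (thinSupport_subset hF)

lemma eq_one_of_thinSupport_eq_empty (hψ : Continuous ψ) (h : ψ.thinSupport = ∅) : ψ = 1 := by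
  obtain ⟨F, hF⟩ := ψ.exists_finset_of_continuous hψ
  refine DFunLike.ext _ _ fun x => ?_
  rw [ψ.map_eq_prod_map_thinSingle hF x, one_apply]
  exact Finset.prod_eq_one fun i _ => by_contra fun hi => (eq_empty_iff_forall_notMem.1 h) i hi

lemma map_eq_of_thinSupport_inter_supp (hψ : Continuous ψ) {x : thinAddSubgroup} {i : ℕ}
    (h : ψ.thinSupport ∩ supp x = {i}) : ψ x = ψ (thinSingle i) := by
  obtain ⟨F, hF⟩ := ψ.exists_finset_of_continuous hψ
  have hi : i ∈ ψ.thinSupport ∩ supp x := h ▸ mem_singleton i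
  rw [ψ.map_eq_prod_map_thinSingle hF x]
  refine Finset.prod_eq_single_of_mem i (Finset.mem_filter.2 ⟨thinSupport_subset hF hi.1, hi.2⟩)
    fun j hj hji => by_contra fun hψj => hji ?_
  exact mem_singleton_iff.1 (h ▸ ⟨hψj, (Finset.mem_filter.1 hj).2⟩)

end AddChar

theorem AddChar.finite_setOf_ne_one_of_tendsto {ψ : ℕ → AddChar thinAddSubgroup Circle}
    (hψ : ∀ n, Continuous (ψ n)) (h : ∀ x, Tendsto (fun n => ψ n x) atTop (𝓝 1)) :
    {n | ψ n ≠ 1}.Finite := by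
  by_contra hinf
  have hev : ∀ x, ∀ᶠ n in atTop, ψ n x = 1 := fun x =>
    eventually_eq_one_of_tendsto_of_sq_eq_one (fun n => (ψ n).sq_eq_one_of_thin x) (h x)
  have hloc : ∀ i, {n | i ∈ (ψ n).thinSupport}.Finite := fun i =>
    Filter.eventually_cofinite.1 (Nat.cofinite_eq_atTop ▸ hev (thinSingle i))
  have hne : {n | ((ψ n).thinSupport).Nonempty}.Infinite :=
    fun hfin => hinf (hfin.subset fun n hn => nonempty_iff_ne_empty.2
      fun h => hn (eq_one_of_thinSupport_eq_empty (hψ n) h))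
  obtain ⟨A, hA, hfreq⟩ := exists_thin_frequently_inter_eq_singleton
    (fun n => finite_thinSupport (hψ n)) hloc hne
  obtain ⟨n, ⟨i, hi⟩, hn⟩ := (hfreq.and_eventually (hev (thinIndicator hA))).exists
  have hsupp : supp (thinIndicator hA : ℕ → ZMod 2) = A := supp_indicator_one A
  have hmem : i ∈ (ψ n).thinSupport := (hi ▸ mem_singleton i).1
  exact hmem (map_eq_of_thinSupport_inter_supp (hψ n) (hsupp ▸ hi) ▸ hn)

def ThinDual.toAddChar (χ : ThinDual) : AddChar thinAddSubgroup Circle where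
  toFun := χ.1
  map_zero_eq_one' := by simpa using χ.2.2 0 0
  map_add_eq_mul' := χ.2.2

@[simp]
lemma ThinDual.toAddChar_apply (χ : ThinDual) (x : thinAddSubgroup) :
    χ.toAddChar x = χ.1 x :=
  rfl

lemma ThinDual.toAddChar_injective : Function.Injective ThinDual.toAddChar :=
  fun _ _ h => Subtype.ext (funext (DFunLike.congr_fun h))

lemma eventuallyConstant_of_eventually_eq {X : Type*} {f : ℕ → X} {a : X}
    (h : ∀ᶠ n in atTop, f n = a) : EventuallyConstant f := by
  obtain ⟨N, hN⟩ := eventually_atTop.1 h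
  exact ⟨N, fun n hn => (hN n hn).trans (hN N le_rfl).symm⟩

theorem ThinDual.eventuallyConstant_of_tendsto {f : ℕ → ThinDual} {a : ThinDual}
    (h : ∀ x : thinAddSubgroup, Tendsto (fun n => (f n).1 x) atTop (𝓝 (a.1 x))) :
    EventuallyConstant f := by
  set ψ : ℕ → AddChar thinAddSubgroup Circle := fun n => (f n).toAddChar / a.toAddChar
  have hψ : ∀ n, Continuous (ψ n) := fun n =>
    ((f n).2.1.div' a.2.1).congr fun x => by simp [ψ, AddChar.div_apply']
  have hlim : ∀ x, Tendsto (fun n => ψ n x) atTop (𝓝 1) := fun x => by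
    simpa [ψ, AddChar.div_apply'] using (h x).div_const (a.1 x)
  have hfin := AddChar.finite_setOf_ne_one_of_tendsto hψ hlim
  refine eventuallyConstant_of_eventually_eq (a := a) ?_
  rw [← Nat.cofinite_eq_atTop]
  exact Filter.eventually_cofinite.2
    (hfin.subset fun n hn h => hn (ThinDual.toAddChar_injective (div_eq_one.1 h)))

/-- For `G = {x ∈ (ℤ/2)^ℕ : supp x thin}` (a dense subgroup of the compact group
`(ℤ/2)^ℕ` with the subspace topology), the dual group `G_p^∧` contains no nontrivial
convergent sequence; equivalently, every sequence of characters of `G` converging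
pointwise on `G` (to a character) is eventually constant. -/
theorem stmt_5 :
    (¬ ∃ (f : ℕ → ThinDual) (a : ThinDual),
        Tendsto f atTop (𝓝 a) ∧ ¬ EventuallyConstant f) ∧
    (∀ (f : ℕ → ThinDual) (a : ThinDual),
        (∀ x : ↥thinAddSubgroup, Tendsto (fun n => (f n).1 x) atTop (𝓝 (a.1 x))) →
        EventuallyConstant f) := by
  refine ⟨?_, fun f a => ThinDual.eventuallyConstant_of_tendsto⟩
  rintro ⟨f, a, hf, hnc⟩
  refine hnc (ThinDual.eventuallyConstant_of_tendsto (a := a) fun x => ?_)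
  exact (((continuous_apply x).comp continuous_subtype_val).tendsto a).comp hf
end

section
/- Let G = {x ∈ (ℤ/2)^ℕ : supp(x) is thin}, a dense subgroup of the compact group (ℤ/2)^ℕ with the subspace topology. Then every compact subset of the dual group G_p^∧ is finite. -/
open Filter Topology Set

/-!
A continuous character `χ` of `G` takes only the values `±1` and is trivial on a neighbourhood of
`0`, so it depends on finitely many coordinates and is determined by its values `χ(e_n)`. Hence
`χ ↦ (χ(e_n))_n` is a continuous injection into the metrizable space `T^ℕ`, a compact `K ⊆ G^∧`
is sequentially compact, and an infinite one contains a nontrivial convergent sequence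
`χ_j → χ`. The quotients `χ_j / χ` are nontrivial characters tending pointwise to `1`, so their
supports `{n | (χ_j / χ)(e_n) ≠ 1}` escape to infinity. Along a subsequence the supports are so
far apart that a thin set `X` meets each of them in exactly one point; at the indicator of `X`
every one of these quotients equals `-1`, contradicting the convergence.
-/

lemma IsCompact.isSeqCompact_of_injOn {X Y : Type*} [TopologicalSpace X] [TopologicalSpace Y]
    [T2Space Y] [FirstCountableTopology Y] {K : Set X} (hK : IsCompact K) {f : X → Y}
    (hf : Continuous f) (hinj : K.InjOn f) : IsSeqCompact K := by
  have : CompactSpace K := isCompact_iff_compactSpace.1 hK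
  have : FirstCountableTopology K :=
    ((hf.comp continuous_subtype_val).isClosedEmbedding
      hinj.injective).isEmbedding.firstCountableTopology
  intro u hu
  obtain ⟨a, φ, hφ, hlim⟩ := CompactSpace.tendsto_subseq fun n => (⟨u n, hu n⟩ : K)
  exact ⟨a, a.2, φ, hφ, (continuous_subtype_val.tendsto a).comp hlim⟩

lemma Circle.eq_one_or_eq_neg_one_of_mul_self {z : Circle} (h : z * z = 1) :
    z = 1 ∨ z = -1 := by
  have h' : (z : ℂ) * z = 1 := by rw [← Circle.coe_mul, h, Circle.coe_one]
  rcases mul_self_eq_one_iff.1 h' with h1 | h1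
  · exact .inl (Circle.ext h1)
  · exact .inr (Circle.ext h1)

namespace AddChar

variable {A : Type*} [AddMonoid A]

lemma map_eq_one_of_ne_neg_one (ψ : AddChar A Circle) {x : A} (hx : x + x = 0)
    (h : ψ x ≠ -1) : ψ x = 1 :=
  (Circle.eq_one_or_eq_neg_one_of_mul_self <| by
    rw [← map_add_eq_mul, hx, map_zero_eq_one]).resolve_right h

lemma eventually_map_eq_one_of_tendsto {ι : Type*} {l : Filter ι} {ψ : ι → AddChar A Circle}
    {x : A} (hx : x + x = 0) (h : Tendsto (fun j => ψ j x) l (𝓝 1)) :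
    ∀ᶠ j in l, ψ j x = 1 :=
  (h.eventually_ne (Circle.neg_ne_self 1).symm).mono fun j hj =>
    (ψ j).map_eq_one_of_ne_neg_one hx hj

lemma map_sum_eq_prod {A M ι : Type*} [AddCommMonoid A] [CommMonoid M] (ψ : AddChar A M)
    (s : Finset ι) (f : ι → A) : ψ (∑ i ∈ s, f i) = ∏ i ∈ s, ψ (f i) :=
  map_prod ψ.toMonoidHom (fun i => Multiplicative.ofAdd (f i)) s

end AddChar

lemma AddSubgroup.add_self_eq_zero_of_zmod_two {ι : Type*} {H : AddSubgroup (ι → ZMod 2)}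
    (x : H) : x + x = 0 :=
  Subtype.ext <| funext fun _ => CharTwo.add_self_eq_zero _

lemma AddChar.exists_finset_map_eq_one {ι : Type*} {H : AddSubgroup (ι → ZMod 2)}
    (ψ : AddChar H Circle) (hψ : Continuous ψ) :
    ∃ F : Finset ι, ∀ x : H, (∀ i ∈ F, x.1 i = 0) → ψ x = 1 := by
  have hnhds : ψ ⁻¹' {-1}ᶜ ∈ 𝓝 (0 : H) :=
    hψ.continuousAt.preimage_mem_nhds <| by
      rw [map_zero_eq_one]
      exact compl_singleton_mem_nhds (Circle.neg_ne_self 1).symm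
  rw [nhds_subtype_eq_comap, mem_comap] at hnhds
  obtain ⟨t, ht, hsub⟩ := hnhds
  rw [AddSubgroup.coe_zero, nhds_pi, Filter.mem_pi] at ht
  obtain ⟨I, hI, s, hs, hIs⟩ := ht
  refine ⟨hI.toFinset, fun x hx => ψ.map_eq_one_of_ne_neg_one
    (AddSubgroup.add_self_eq_zero_of_zmod_two x) (hsub (hIs fun i hi => ?_))⟩
  rw [hx i (hI.mem_toFinset.2 hi)]
  exact mem_of_mem_nhds (hs i)

lemma thin_range_of_mul_self_le {d : ℕ → ℕ} (hd : ∀ i, i * i ≤ d i) : Thin (range d) := by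
  have hcard : ∀ k, (range d ∩ Iio k).ncard ≤ Nat.sqrt k + 1 := by
    intro k
    have hsub : range d ∩ Iio k ⊆ d '' Iic (Nat.sqrt k) := by
      rintro _ ⟨⟨i, rfl⟩, hi⟩
      exact ⟨i, Nat.le_sqrt.2 ((hd i).trans (le_of_lt hi)), rfl⟩
    calc (range d ∩ Iio k).ncard ≤ (d '' Iic (Nat.sqrt k)).ncard :=
          ncard_le_ncard hsub ((finite_Iic _).image d)
      _ ≤ (Iic (Nat.sqrt k)).ncard := ncard_image_le (finite_Iic _)
      _ = Nat.sqrt k + 1 := by simp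
  have hbound : ∀ k : ℕ, ((Nat.sqrt k + 1 : ℕ) : ℝ) / k ≤ (√(k : ℝ))⁻¹ + (k : ℝ)⁻¹ := by
    intro k
    calc ((Nat.sqrt k + 1 : ℕ) : ℝ) / k = (Nat.sqrt k : ℝ) / k + (k : ℝ)⁻¹ := by
          push_cast; ring
      _ ≤ √(k : ℝ) / k + (k : ℝ)⁻¹ := by gcongr; exact Real.nat_sqrt_le_real_sqrt
      _ = (√(k : ℝ))⁻¹ + (k : ℝ)⁻¹ := by rw [Real.sqrt_div_self', one_div]
  have hlim : Tendsto (fun k : ℕ => (√(k : ℝ))⁻¹ + (k : ℝ)⁻¹) atTop (𝓝 0) := by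
    simpa using (tendsto_inv_atTop_zero.comp
      (Real.tendsto_sqrt_atTop.comp tendsto_natCast_atTop_atTop)).add
      (tendsto_inv_atTop_zero.comp tendsto_natCast_atTop_atTop)
  exact squeeze_zero (fun k => by positivity)
    (fun k => (div_nat_le k (hcard k)).trans (hbound k)) hlim

lemma exists_strictMono_forall_mul_self_le {T : ℕ → Set ℕ} (hfin : ∀ j, (T j).Finite)
    (hT : ∀ N, ∀ᶠ j in atTop, ∀ n ∈ T j, N ≤ n) :
    ∃ φ : ℕ → ℕ, StrictMono φ ∧
      ∀ m n, m < n → ∀ a ∈ T (φ m), ∀ b ∈ T (φ n), (a + 1) * (a + 1) ≤ b := by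
  obtain ⟨φ, -, hφ⟩ := exists_seq_of_forall_finset_exists (fun _ => True)
    (fun j k => j < k ∧ ∀ a ∈ T j, ∀ b ∈ T k, (a + 1) * (a + 1) ≤ b) fun s _ => by
      have hlater : ∀ j ∈ s, ∀ᶠ k in atTop,
          j < k ∧ ∀ a ∈ T j, ∀ b ∈ T k, (a + 1) * (a + 1) ≤ b := by
        intro j _
        obtain ⟨M, hM⟩ := (hfin j).bddAbove
        filter_upwards [eventually_gt_atTop j, hT ((M + 1) * (M + 1))] with k hjk hk
        exact ⟨hjk, fun a ha b hb =>
          (Nat.mul_self_le_mul_self (Nat.succ_le_succ (hM ha))).trans (hk b hb)⟩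
      obtain ⟨k, hk⟩ := ((Finset.eventually_all s).2 hlater).exists
      exact ⟨k, trivial, hk⟩
  exact ⟨φ, strictMono_nat_of_lt_succ fun m => (hφ m (m + 1) m.lt_succ_self).1,
    fun m n hmn => (hφ m n hmn).2⟩

namespace thinAddSubgroup

def single (n : ℕ) : thinAddSubgroup :=
  ⟨Pi.single n 1, thin_of_finite <| (finite_singleton n).subset fun m hm => by
    by_contra h
    exact hm (Pi.single_eq_of_ne h 1)⟩

lemma sum_nsmul_single_apply (F : Finset ℕ) (x : thinAddSubgroup) {m : ℕ} (hm : m ∈ F) :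
    (∑ n ∈ F, (x.1 n).val • single n).1 m = x.1 m := by
  simp only [AddSubgroup.val_finsetSum, AddSubgroup.coe_nsmul, Finset.sum_apply, Pi.smul_apply,
    single, Pi.single_apply, smul_ite, smul_zero, nsmul_one, ZMod.natCast_zmod_val,
    Finset.sum_ite_eq, if_pos hm]

end thinAddSubgroup

namespace AddChar

open thinAddSubgroup

variable (ψ : AddChar thinAddSubgroup Circle)

lemma map_eq_prod_of_finset {F : Finset ℕ}
    (hF : ∀ x : thinAddSubgroup, (∀ n ∈ F, x.1 n = 0) → ψ x = 1) (x : thinAddSubgroup) :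
    ψ x = ∏ n ∈ F, ψ (single n) ^ (x.1 n).val := by
  set y : thinAddSubgroup := ∑ n ∈ F, (x.1 n).val • single n
  have hxy : ψ (x - y) = 1 := hF _ fun n hn => by
    rw [AddSubgroup.coe_sub, Pi.sub_apply, sum_nsmul_single_apply F x hn, sub_self]
  calc ψ x = ψ (y + (x - y)) := by rw [add_sub_cancel]
    _ = ∏ n ∈ F, ψ (single n) ^ (x.1 n).val := by
      rw [map_add_eq_mul, hxy, mul_one, map_sum_eq_prod]
      simp only [map_nsmul_eq_pow]

variable {ψ}

lemma map_eq_of_forall_map_single_ne_one (hψ : Continuous ψ) {x y : thinAddSubgroup}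
    (h : ∀ n, ψ (single n) ≠ 1 → x.1 n = y.1 n) : ψ x = ψ y := by
  obtain ⟨F, hF⟩ := ψ.exists_finset_map_eq_one hψ
  rw [ψ.map_eq_prod_of_finset hF x, ψ.map_eq_prod_of_finset hF y]
  refine Finset.prod_congr rfl fun n _ => ?_
  by_cases hn : ψ (single n) = 1
  · rw [hn, one_pow, one_pow]
  · rw [h n hn]

lemma eq_one_of_forall_map_single_eq_one (hψ : Continuous ψ) (h : ∀ n, ψ (single n) = 1) :
    ψ = 1 :=
  eq_one_iff.2 fun _ =>
    (map_eq_of_forall_map_single_ne_one hψ (y := 0) fun n hn => absurd (h n) hn).trans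
      (map_zero_eq_one ψ)

/-- The witness is the indicator of a set meeting each support `{n | ψ i (single n) ≠ 1}` in
exactly one point; the separation of the supports makes that set thin. -/
lemma exists_forall_map_ne_one {ψ : ℕ → AddChar thinAddSubgroup Circle}
    (hψ : ∀ i, Continuous (ψ i)) (hne : ∀ i, ψ i ≠ 1)
    (hsep : ∀ m n, m < n → ∀ a, ψ m (single a) ≠ 1 → ∀ b, ψ n (single b) ≠ 1 →
      (a + 1) * (a + 1) ≤ b) :
    ∃ x : thinAddSubgroup, ∀ i, ψ i x ≠ 1 := by
  have hsupp : ∀ i, ∃ d, ψ i (single d) ≠ 1 := fun i => by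
    by_contra! h
    exact hne i (eq_one_of_forall_map_single_eq_one (hψ i) h)
  choose d hd using hsupp
  have hdisj : ∀ i k, ψ i (single (d k)) ≠ 1 → k = i := by
    intro i k h
    rcases lt_trichotomy k i with hki | rfl | hik
    · nlinarith [hsep k i hki _ (hd k) _ h]
    · rfl
    · nlinarith [hsep i k hik _ h _ (hd k)]
  have hsq : ∀ i, i * i ≤ d i := by
    intro i
    induction i with
    | zero => exact Nat.zero_le _
    | succ i ih =>
      exact (Nat.mul_self_le_mul_self (Nat.succ_le_succ ((Nat.le_mul_self i).trans ih))).trans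
        (hsep i (i + 1) i.lt_succ_self _ (hd i) _ (hd (i + 1)))
  let x : thinAddSubgroup :=
    ⟨(range d).indicator 1, thin_mono support_indicator_subset (thin_range_of_mul_self_le hsq)⟩
  refine ⟨x, fun i => ?_⟩
  rw [map_eq_of_forall_map_single_ne_one (hψ i) (y := single (d i)) fun n hn => ?_]
  · exact hd i
  by_cases hni : n = d i
  · subst hni
    simp [x, single]
  · have hnd : n ∉ range d := by
      rintro ⟨k, rfl⟩
      exact hni (congrArg d (hdisj i k hn))
    simp [x, single, hnd, hni]

lemma eventually_eq_one_of_tendsto_one {ψ : ℕ → AddChar thinAddSubgroup Circle}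
    (hψ : ∀ j, Continuous (ψ j)) (hlim : ∀ x, Tendsto (fun j => ψ j x) atTop (𝓝 1)) :
    ∀ᶠ j in atTop, ψ j = 1 := by
  by_contra h
  obtain ⟨φ, hφ, hne⟩ := extraction_of_frequently_atTop (not_eventually.1 h)
  have hfin : ∀ j, {n | ψ (φ j) (single n) ≠ 1}.Finite := fun j => by
    obtain ⟨F, hF⟩ := (ψ (φ j)).exists_finset_map_eq_one (hψ _)
    refine F.finite_toSet.subset fun n hn => ?_
    by_contra hnF
    refine hn (hF _ fun m hm => Pi.single_eq_of_ne ?_ 1)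
    rintro rfl
    exact hnF hm
  have hT : ∀ N, ∀ᶠ j in atTop, ∀ n ∈ {n | ψ (φ j) (single n) ≠ 1}, N ≤ n := by
    intro N
    have hsmall : ∀ᶠ j in atTop, ∀ n ∈ Finset.range N, ψ (φ j) (single n) = 1 :=
      (Finset.eventually_all _).2 fun n _ => eventually_map_eq_one_of_tendsto
        (AddSubgroup.add_self_eq_zero_of_zmod_two _) ((hlim _).comp hφ.tendsto_atTop)
    filter_upwards [hsmall] with j hj n hn
    by_contra! hnN
    exact hn (hj n (Finset.mem_range.2 hnN))
  obtain ⟨φ', hφ', hsep⟩ := exists_strictMono_forall_mul_self_le hfin hT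
  obtain ⟨x, hx⟩ := exists_forall_map_ne_one (fun i => hψ (φ (φ' i))) (fun i => hne _) hsep
  obtain ⟨i, hi⟩ := (eventually_map_eq_one_of_tendsto
    (AddSubgroup.add_self_eq_zero_of_zmod_two x)
    ((hlim x).comp (hφ.comp hφ').tendsto_atTop)).exists
  exact hx i hi

end AddChar

namespace ThinDual

open thinAddSubgroup

def toAddChar_s6 (χ : ThinDual) : AddChar thinAddSubgroup Circle where
  toFun := χ.1
  map_zero_eq_one' := by
    have h := χ.2.2 0 0
    rw [add_zero] at h
    exact left_eq_mul.1 h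
  map_add_eq_mul' := χ.2.2

lemma toAddChar_div_apply (χ χ' : ThinDual) (x : thinAddSubgroup) :
    (χ.toAddChar_s6 / χ'.toAddChar_s6) x = χ.1 x / χ'.1 x :=
  AddChar.div_apply' _ _ x

lemma continuous_toAddChar_div (χ χ' : ThinDual) : Continuous (χ.toAddChar_s6 / χ'.toAddChar_s6) :=
  (χ.2.1.div' χ'.2.1).congr fun x => (toAddChar_div_apply χ χ' x).symm

lemma eq_of_toAddChar_div_eq_one {χ χ' : ThinDual} (h : χ.toAddChar_s6 / χ'.toAddChar_s6 = 1) :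
    χ = χ' :=
  Subtype.ext <| funext fun x => div_eq_one.1 <| by
    rw [← toAddChar_div_apply, h, AddChar.one_apply]

lemma continuous_apply_single : Continuous fun χ : ThinDual => fun n => χ.1 (single n) :=
  continuous_pi fun n => (continuous_apply (single n)).comp continuous_subtype_val

lemma injective_apply_single :
    Function.Injective fun χ : ThinDual => fun n => χ.1 (single n) := fun χ χ' h =>
  eq_of_toAddChar_div_eq_one <|
    AddChar.eq_one_of_forall_map_single_eq_one (continuous_toAddChar_div χ χ') fun n => by
      rw [toAddChar_div_apply, div_eq_one]
      exact congrFun h n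

lemma eventually_eq_of_tendsto {u : ℕ → ThinDual} {χ : ThinDual} (h : Tendsto u atTop (𝓝 χ)) :
    ∀ᶠ j in atTop, u j = χ := by
  have hlim : ∀ x, Tendsto (fun j => (u j).1 x) atTop (𝓝 (χ.1 x)) := fun x =>
    (((continuous_apply x).comp continuous_subtype_val).tendsto χ).comp h
  have hone := AddChar.eventually_eq_one_of_tendsto_one
    (fun j => continuous_toAddChar_div (u j) χ) fun x => by
      simpa only [toAddChar_div_apply, div_self'] using
        (hlim x).div' (tendsto_const_nhds (x := χ.1 x))
  exact hone.mono fun j hj => eq_of_toAddChar_div_eq_one hj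

end ThinDual

/-- For `G = {x ∈ (ℤ/2)^ℕ : supp x thin}` (a dense subgroup of the compact group
`(ℤ/2)^ℕ` with the subspace topology), every compact subset of the dual group `G_p^∧`
(the characters of `G` with the topology of pointwise convergence) is finite. -/
theorem stmt_6 :
    ∀ K : Set ThinDual, IsCompact K → K.Finite := by
  intro K hK
  by_contra hinf
  have hseq : IsSeqCompact K := hK.isSeqCompact_of_injOn ThinDual.continuous_apply_single
    ThinDual.injective_apply_single.injOn
  let u := Set.Infinite.natEmbedding K hinf
  obtain ⟨χ, -, φ, hφ, hlim⟩ := hseq fun j => (u j).2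
  obtain ⟨N, hN⟩ := (ThinDual.eventually_eq_of_tendsto hlim).exists_forall_of_atTop
  have huN : u (φ N) = u (φ (N + 1)) :=
    Subtype.ext ((hN N le_rfl).trans (hN (N + 1) N.le_succ).symm)
  exact N.lt_succ_self.ne (hφ.injective (u.injective huN))
end

section
/- Let G be a precompact Hausdorff topological abelian group and let K be a compact Hausdorff topological space. Then there exists a topological embedding of K into the dual group G_p^∧ if and only if there exists a continuous group homomorphism φ : G → C_p(K,T) whose image φ(G) separates the points of K, i.e., for any two distinct points x, y ∈ K there is g ∈ φ(G) with g(x) ≠ g(y). -/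
open Filter Topology Set

/-- The continuous characters of a topological group `G`, as a subset of the product
`Circle ^ G`; the corresponding subtype, with the subspace topology, is the dual group
`G_p^∧` endowed with the topology of pointwise convergence. -/
def pChar (G : Type*) [Group G] [TopologicalSpace G] : Set (G → Circle) :=
  {χ : G → Circle | Continuous χ ∧ ∀ x y : G, χ (x * y) = χ x * χ y}

/-- The topology of pointwise convergence on the group `C(K, 𝕋)` of continuous
circle-valued functions on `K` (i.e. the topology induced from the product `𝕋^K`). -/
noncomputable def ptTop (K : Type*) [TopologicalSpace K] : TopologicalSpace C(K, Circle) :=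
  TopologicalSpace.induced (fun f : C(K, Circle) => (f : K → Circle)) Pi.topologicalSpace

/-! Both sides amount to a map `K × G → 𝕋`, `(x, g) ↦ e x g = φ g x`, that is a character in `g`
and continuous in each variable separately: pointwise continuity of `φ` is continuity in `g`, and
continuity of `e` into `G_p^∧ ⊆ 𝕋^G` is continuity in `x`. Injectivity of `e` is separation of
points by `φ(G)`, and a continuous injection of the compact space `K` into the Hausdorff space
`G_p^∧` is an embedding. -/

theorem continuous_ptTop_iff {X K : Type*} [TopologicalSpace X] [TopologicalSpace K]
    {f : X → C(K, Circle)} :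
    Continuous[inferInstance, ptTop K] f ↔ Continuous fun x => (f x : K → Circle) :=
  continuous_induced_rng

namespace pChar

variable {G : Type*} [Group G] [TopologicalSpace G] {K : Type*} [TopologicalSpace K]

theorem map_one {χ : G → Circle} (hχ : χ ∈ pChar G) : χ 1 = 1 :=
  left_eq_mul.mp (by simpa only [mul_one] using hχ.2 1 1)

noncomputable def evalHom (e : C(K, pChar G)) : G →* C(K, Circle) where
  toFun g := ⟨fun x => (e x).1 g, (continuous_apply g).comp (continuous_subtype_val.comp e.2)⟩
  map_one' := by ext x; simp [map_one (e x).2]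
  map_mul' g h := by ext x; simp [(e x).2.2 g h]

theorem continuous_evalHom (e : C(K, pChar G)) :
    Continuous[inferInstance, ptTop K] (evalHom e) :=
  continuous_ptTop_iff.mpr <| continuous_pi fun x => (e x).2.1

theorem evalHom_separates {e : C(K, pChar G)} (he : Function.Injective e) (x y : K)
    (hxy : x ≠ y) : ∃ f ∈ range (evalHom e), f x ≠ f y := by
  obtain ⟨g, hg⟩ := Function.ne_iff.mp fun h => hxy (he (Subtype.ext h))
  exact ⟨evalHom e g, ⟨g, rfl⟩, hg⟩

noncomputable def ofHom (φ : G →* C(K, Circle))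
    (hφ : Continuous[inferInstance, ptTop K] φ) (x : K) : pChar G :=
  ⟨fun g => φ g x, (continuous_apply x).comp (continuous_ptTop_iff.mp hφ),
    fun g h => by simp⟩

theorem continuous_ofHom (φ : G →* C(K, Circle))
    (hφ : Continuous[inferInstance, ptTop K] φ) : Continuous (ofHom φ hφ) :=
  (continuous_pi fun g => (φ g).continuous).subtype_mk _

theorem injective_ofHom (φ : G →* C(K, Circle))
    (hφ : Continuous[inferInstance, ptTop K] φ)
    (hsep : ∀ x y : K, x ≠ y → ∃ f ∈ range φ, f x ≠ f y) : Function.Injective (ofHom φ hφ) := by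
  intro x y hxy
  by_contra hne
  obtain ⟨_, ⟨g, rfl⟩, hg⟩ := hsep x y hne
  exact hg (congrFun (congrArg Subtype.val hxy) g)

end pChar

theorem stmt_12_general {G : Type*} [CommGroup G] [UniformSpace G]
    {K : Type*} [TopologicalSpace K] [CompactSpace K] :
    (∃ e : K → ↥(pChar G), Topology.IsEmbedding e) ↔
    (∃ φ : G →* C(K, Circle), Continuous[inferInstance, ptTop K] ⇑φ ∧
      ∀ x y : K, x ≠ y → ∃ g ∈ Set.range ⇑φ, g x ≠ g y) := by
  constructor
  · rintro ⟨e, he⟩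
    let e' : C(K, pChar G) := ⟨e, he.continuous⟩
    exact ⟨pChar.evalHom e', pChar.continuous_evalHom e', pChar.evalHom_separates he.injective⟩
  · rintro ⟨φ, hφ, hsep⟩
    exact ⟨pChar.ofHom φ hφ, ((pChar.continuous_ofHom φ hφ).isClosedEmbedding
      (pChar.injective_ofHom φ hφ hsep)).isEmbedding⟩

/-- Let `G` be a precompact Hausdorff topological abelian group and `K` a compact
Hausdorff space.  Then `K` embeds topologically into the dual group `G_p^∧` if and only
if there is a continuous homomorphism `φ : G → C_p(K, 𝕋)` whose image separates the
points of `K`. -/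
theorem stmt_12 {G : Type*} [CommGroup G] [UniformSpace G] [IsUniformGroup G] [T2Space G]
    (hpc : TotallyBounded (Set.univ : Set G))
    {K : Type*} [TopologicalSpace K] [CompactSpace K] [T2Space K] :
    (∃ e : K → ↥(pChar G), Topology.IsEmbedding e) ↔
    (∃ φ : G →* C(K, Circle), Continuous[inferInstance, ptTop K] ⇑φ ∧
      ∀ x y : K, x ≠ y → ∃ g ∈ Set.range ⇑φ, g x ≠ g y) :=
  stmt_12_general
end

section
/- If G is an infinite pseudocompact Hausdorff topological abelian group, then every compact subset of the dual group G_p^∧ is finite. -/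
/-!
Evaluation maps `G` densely into the compact group `X ⊆ Circle ^ K`, the closure of its image,
and every `χ ∈ K` extends to the continuous character `x ↦ x χ` of `X`. Since `G` is
pseudocompact, its image meets every nonempty Gδ subset of `X`; with this, a Grothendieck-type
double-limit argument shows that a pointwise limit of the extensions is determined by its
restriction to `G`, so the extensions of the characters in `K` form a compact set of continuous
characters of `X` for pointwise convergence on `X`. Such a set is sequentially compact, because
countably many continuous functions on a compact space are determined by their values on one
countable set. But by the orthogonality of characters with respect to Haar measure, a pointwise
convergent sequence of continuous characters of a compact group is eventually constant.
-/

open Filter Topology Set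

open MeasureTheory

def IsPseudocompact (G : Type*) [TopologicalSpace G] : Prop :=
  ∀ f : G → ℝ, Continuous f → ∃ C : ℝ, ∀ x : G, |f x| ≤ C

def GδDenseRange {G X : Type*} [TopologicalSpace X] (ι : G → X) : Prop :=
  ∀ s : Set X, IsGδ s → s.Nonempty → ∃ g, ι g ∈ s

theorem IsPseudocompact.gδDenseRange {G X : Type*} [TopologicalSpace G] [TopologicalSpace X]
    [CompletelyRegularSpace X] (hG : IsPseudocompact G) {ι : G → X} (hι : Continuous ι)
    (hd : DenseRange ι) : GδDenseRange ι := by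
  rintro _ hs ⟨x₀, hx₀⟩
  obtain ⟨U, hU, rfl⟩ := hs.eq_iInter_nat
  by_contra! hmiss
  rw [mem_iInter] at hx₀
  choose f hf hfx₀ hf1 using fun n ↦
    completelyRegularSpace_iff_isOpen.mp ‹_› x₀ (U n) (hU n) (hx₀ n)
  -- `h` vanishes at `x₀` but is positive on the range of `ι`, so `1 / (h ∘ ι)` is unbounded.
  set h : X → ℝ := fun x ↦ ∑' n, (1 / 2 : ℝ) ^ n * f n x
  have hterm : ∀ n x, ‖(1 / 2 : ℝ) ^ n * f n x‖ ≤ (1 / 2) ^ n := fun n x ↦ by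
    rw [norm_mul, norm_pow, Real.norm_of_nonneg (f n x).2.1, Real.norm_of_nonneg (by norm_num)]
    exact mul_le_of_le_one_right (by positivity) (f n x).2.2
  have hsum : ∀ x, Summable fun n ↦ (1 / 2 : ℝ) ^ n * f n x := fun x ↦
    summable_geometric_two.of_norm_bounded (hterm · x)
  have hh : Continuous h :=
    continuous_tsum (fun n ↦ continuous_const.mul (continuous_subtype_val.comp (hf n)))
      summable_geometric_two hterm
  have hpos : ∀ g, 0 < h (ι g) := fun g ↦ by
    obtain ⟨n, hn⟩ : ∃ n, ι g ∉ U n := by simpa using hmiss g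
    calc (0 : ℝ) < (1 / 2) ^ n * f n (ι g) := by simp [hf1 n hn]
      _ ≤ h (ι g) := (hsum _).le_tsum n fun m _ ↦ mul_nonneg (by positivity) (f m _).2.1
  obtain ⟨C, hC⟩ :=
    hG (fun g ↦ 1 / h (ι g)) (continuous_const.div (hh.comp hι) (hpos · |>.ne'))
  have hx₀h : h x₀ < 1 / (|C| + 1) := by simpa [h, hfx₀] using by positivity
  obtain ⟨g, hg⟩ := hd.exists_mem_open (isOpen_lt hh continuous_const) ⟨x₀, hx₀h⟩
  have := (le_abs_self _).trans (hC g)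
  rw [mem_ofPred_eq, lt_one_div (hpos g) (by positivity)] at hg
  linarith [le_abs_self C]

theorem GδDenseRange.denseRange {G X : Type*} [TopologicalSpace X] {ι : G → X}
    (hι : GδDenseRange ι) : DenseRange ι :=
  dense_iff_inter_open.2 fun s hs hne ↦
    let ⟨g, hg⟩ := hι s hs.isGδ hne
    ⟨ι g, hg, g, rfl⟩

theorem exists_seq_of_mem_closure_of_comp_eq {G X M : Type*} [TopologicalSpace X]
    [PseudoMetricSpace M] {ι : G → X} (hι : DenseRange ι) {KX : Set (X → M)}
    (hcont : ∀ f ∈ KX, Continuous f) {u v : X → M} (hu : u ∈ closure KX) (hv : Continuous v)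
    (huv : u ∘ ι = v ∘ ι) (x₀ : X) {δ : ℝ} (hδ : 0 < δ) :
    ∃ (φ : ℕ → X → M) (g : ℕ → G), (∀ n, φ n ∈ KX) ∧ (∀ n, dist (φ n x₀) (u x₀) < δ) ∧
      (∀ n, dist (v (ι (g n))) (v x₀) < δ) ∧
      (∀ m n, m < n → dist (φ n (ι (g m))) (v (ι (g m))) < δ) ∧
      (∀ m n, m < n → dist (φ m (ι (g n))) (φ m x₀) < δ) := by
  obtain ⟨p, hP, hr⟩ := exists_seq_of_forall_finset_exists
    (fun p : (X → M) × G ↦ p.1 ∈ KX ∧ dist (p.1 x₀) (u x₀) < δ ∧ dist (v (ι p.2)) (v x₀) < δ)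
    (fun p q ↦ dist (q.1 (ι p.2)) (v (ι p.2)) < δ ∧ dist (p.1 (ι q.2)) (p.1 x₀) < δ)
    fun s hs ↦ by
      have happrox : ∀ y, ∀ᶠ f in 𝓝 u, dist (f y) (u y) < δ := fun y ↦
        Metric.tendsto_nhds.1 ((continuous_apply y).tendsto u) δ hδ
      have hnear : ∀ f : X → M, Continuous f → ∀ᶠ x in 𝓝 x₀, dist (f x) (f x₀) < δ :=
        fun f hf ↦ Metric.tendsto_nhds.1 (hf.tendsto x₀) δ hδ
      obtain ⟨φ, hφK, hφx₀, hφs⟩ := ((mem_closure_iff_frequently.1 hu).and_eventually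
        ((happrox x₀).and ((eventually_all_finset s).2 fun p _ ↦ happrox (ι p.2)))).exists
      obtain ⟨_, ⟨g, rfl⟩, hvg, hsg⟩ :=
        ((mem_closure_iff_frequently.1 (hι x₀)).and_eventually ((hnear v hv).and
          ((eventually_all_finset s).2 fun p hp ↦ hnear p.1 (hcont _ (hs p hp).1)))).exists
      refine ⟨(φ, g), ⟨hφK, hφx₀, hvg⟩, fun p hp ↦ ⟨?_, hsg p hp⟩⟩
      rw [← Function.comp_apply (f := v), ← huv]
      exact hφs p hp
  exact ⟨fun n ↦ (p n).1, fun n ↦ (p n).2, fun n ↦ (hP n).1, fun n ↦ (hP n).2.1,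
    fun n ↦ (hP n).2.2, fun m n h ↦ (hr m n h).1, fun m n h ↦ (hr m n h).2⟩

theorem eq_of_mem_closure_of_comp_eq {G X M : Type*} [TopologicalSpace X] [CompactSpace X]
    [MetricSpace M] {ι : G → X} (hι : GδDenseRange ι) {KX : Set (X → M)}
    (hcont : ∀ f ∈ KX, Continuous f) (hK : IsCompact ((· ∘ ι) '' KX)) {u v : X → M}
    (hu : u ∈ closure KX) (hv : Continuous v) (huv : u ∘ ι = v ∘ ι) : u = v := by
  funext x₀
  by_contra hne
  set δ := dist (u x₀) (v x₀) / 7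
  have hδ : 0 < δ := by have := dist_pos.2 hne; positivity
  obtain ⟨φ, g, hφK, hφx₀, hvg, hφg, hφgx₀⟩ :=
    exists_seq_of_mem_closure_of_comp_eq hι.denseRange hcont hu hv huv x₀ hδ
  obtain ⟨_, ⟨ψ, hψK, rfl⟩, hψ⟩ := hK.exists_clusterPt (f := map (fun n ↦ φ n ∘ ι) atTop)
    (le_principal_iff.2 (mem_map.2 (univ_mem' fun n ↦ ⟨φ n, hφK n, rfl⟩)))
  have hψg : ∀ y, MapClusterPt (ψ (ι y)) atTop (fun n ↦ φ n (ι y)) := fun y ↦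
    MapClusterPt.continuousAt_comp (continuous_apply y).continuousAt hψ
  obtain ⟨xs, hxs⟩ := exists_clusterPt_of_compactSpace (map (fun n ↦ ι (g n)) atTop)
  have hxs_le : ∀ f : X → ℝ, Continuous f → ∀ c, (∀ᶠ n in atTop, f (ι (g n)) ≤ c) → f xs ≤ c :=
    fun f hf c ↦ (isClosed_le hf continuous_const).mem_of_mapClusterPt hxs
  have hψv : dist (ψ xs) (v xs) ≤ δ :=
    hxs_le _ ((hcont ψ hψK).dist hv) δ <| .of_forall fun m ↦
      Metric.isClosed_closedBall.mem_of_mapClusterPt (hψg (g m))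
        ((eventually_gt_atTop m).mono fun n hn ↦ (hφg m n hn).le)
  have hvxs : dist (v xs) (v x₀) ≤ δ :=
    hxs_le _ (hv.dist continuous_const) δ (.of_forall fun n ↦ (hvg n).le)
  have hφxs : ∀ m, dist (φ m xs) (φ m x₀) ≤ δ := fun m ↦
    hxs_le _ ((hcont _ (hφK m)).dist continuous_const) δ
      ((eventually_gt_atTop m).mono fun n hn ↦ (hφgx₀ m n hn).le)
  -- Gδ-density: one point of `G` is close to `xs` for all the countably many `φ m` at once.
  obtain ⟨y, hyψ, hyφ⟩ :=
    hι ({x | dist (ψ x) (ψ xs) < δ} ∩ ⋂ m, {x | dist (φ m x) (φ m xs) < δ})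
    ((isOpen_lt ((hcont ψ hψK).dist continuous_const) continuous_const).isGδ.inter
      (.iInter fun m ↦
        (isOpen_lt ((hcont _ (hφK m)).dist continuous_const) continuous_const).isGδ))
    ⟨xs, by simp [hδ]⟩
  rw [mem_iInter] at hyφ
  obtain ⟨n, hn⟩ := ((hψg y).frequently (Metric.ball_mem_nhds _ hδ)).exists
  simp only [mem_ofPred_eq] at hyψ hyφ hn
  have hchain : dist (u x₀) (v x₀) ≤ dist (φ n x₀) (u x₀) + dist (φ n xs) (φ n x₀) +
      dist (φ n (ι y)) (φ n xs) + dist (φ n (ι y)) (ψ (ι y)) + dist (ψ (ι y)) (ψ xs) +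
      dist (ψ xs) (v xs) + dist (v xs) (v x₀) := by
    linarith [dist_triangle4 (u x₀) (φ n x₀) (φ n xs) (φ n (ι y)),
      dist_triangle4 (φ n (ι y)) (ψ (ι y)) (ψ xs) (v xs),
      dist_triangle4 (u x₀) (φ n (ι y)) (v xs) (v x₀), dist_comm (u x₀) (φ n x₀),
      dist_comm (φ n x₀) (φ n xs), dist_comm (φ n xs) (φ n (ι y))]
  linarith [hφx₀ n, hφxs n, hyφ n, show dist (u x₀) (v x₀) = 7 * δ by ring]

theorem isClosed_of_isCompact_image_comp {G X M : Type*} [TopologicalSpace X] [CompactSpace X]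
    [MetricSpace M] {ι : G → X} (hι : GδDenseRange ι) {KX : Set (X → M)}
    (hcont : ∀ f ∈ KX, Continuous f) (hK : IsCompact ((· ∘ ι) '' KX)) : IsClosed KX := by
  refine isClosed_of_closure_subset fun u hu ↦ ?_
  obtain ⟨v, hv, hvu⟩ := hK.isClosed.closure_subset <| image_closure_subset_closure_image
    (continuous_pi fun g ↦ continuous_apply (ι g)) ⟨u, hu, rfl⟩
  rwa [eq_of_mem_closure_of_comp_eq hι hcont hK hu (hcont v hv) hvu.symm]

theorem exists_countable_image_closure_eq_range {X Y : Type*} [TopologicalSpace X]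
    [CompactSpace X] [TopologicalSpace Y] [T2Space Y] [SecondCountableTopology Y] {Φ : X → Y}
    (hΦ : Continuous Φ) : ∃ D : Set X, D.Countable ∧ Φ '' closure D = range Φ := by
  obtain ⟨t, htc, htd⟩ := TopologicalSpace.exists_countable_dense (range Φ)
  refine ⟨rangeSplitting Φ '' t, htc.image _, (image_subset_range _ _).antisymm ?_⟩
  rintro _ ⟨x, rfl⟩
  have hsub : (↑) '' t ⊆ Φ '' closure (rangeSplitting Φ '' t) := by
    rintro _ ⟨y, hy, rfl⟩
    exact ⟨_, subset_closure ⟨y, hy, rfl⟩, apply_rangeSplitting Φ y⟩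
  exact (isClosed_closure.isCompact.image hΦ).isClosed.closure_subset_iff.2 hsub
    (map_mem_closure (f := Subtype.val) continuous_subtype_val (htd ⟨Φ x, x, rfl⟩)
      (mapsTo_image _ t))

theorem exists_countable_injOn_domRestrict_closure_range {X M : Type*} [TopologicalSpace X]
    [CompactSpace X] [TopologicalSpace M] [T2Space M] [SecondCountableTopology M]
    {f : ℕ → X → M} (hcont : ∀ h ∈ closure (range f), Continuous h) :
    ∃ D : Set X, D.Countable ∧ InjOn D.domRestrict (closure (range f)) := by
  set Φ : X → ℕ → M := fun x n ↦ f n x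
  have hΦ : Continuous Φ := continuous_pi fun n ↦ hcont _ (subset_closure ⟨n, rfl⟩)
  have hfactor : ∀ h ∈ closure (range f), ∀ x y, Φ x = Φ y → h x = h y := fun h hh x y hxy ↦
    closure_minimal (t := {h : X → M | h x = h y})
      (by rintro _ ⟨n, rfl⟩; exact congrFun hxy n)
      (isClosed_eq (continuous_apply x) (continuous_apply y)) hh
  obtain ⟨D, hDc, hD⟩ := exists_countable_image_closure_eq_range hΦ
  refine ⟨D, hDc, fun h hh h' hh' hhh' ↦ funext fun x ↦ ?_⟩
  obtain ⟨x', hx', hΦx'⟩ : Φ x ∈ Φ '' closure D := hD ▸ mem_range_self x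
  have hEq : EqOn h h' (closure D) :=
    EqOn.closure (fun y hy ↦ congrFun hhh' ⟨y, hy⟩) (hcont h hh) (hcont h' hh')
  calc h x = h x' := (hfactor h hh _ _ hΦx').symm
    _ = h' x' := hEq hx'
    _ = h' x := hfactor h' hh' _ _ hΦx'

theorem IsCompact.isSeqCompact_of_forall_continuous {X M : Type*} [TopologicalSpace X]
    [CompactSpace X] [TopologicalSpace M] [T2Space M] [SecondCountableTopology M]
    {S : Set (X → M)} (hS : IsCompact S) (hcont : ∀ f ∈ S, Continuous f) : IsSeqCompact S := by
  intro f hf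
  set T := closure (range f)
  have hTS : T ⊆ S := closure_minimal (range_subset_iff.2 hf) hS.isClosed
  obtain ⟨D, hDc, hD⟩ :=
    exists_countable_injOn_domRestrict_closure_range fun h hh ↦ hcont h (hTS hh)
  have : CompactSpace T :=
    isCompact_iff_compactSpace.1 (hS.of_isClosed_subset isClosed_closure hTS)
  have : Countable D := hDc.to_subtype
  have hemb : IsEmbedding fun h : T ↦ D.domRestrict h.1 :=
    (Continuous.isClosedEmbedding
      (continuous_pi fun d ↦ (continuous_apply d.1).comp continuous_subtype_val)
      fun h h' hhh' ↦ Subtype.ext (hD h.2 h'.2 hhh')).isEmbedding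
  have := hemb.firstCountableTopology
  obtain ⟨a, φ, hφ, ha⟩ :=
    CompactSpace.tendsto_subseq fun n ↦ (⟨f n, subset_closure ⟨n, rfl⟩⟩ : T)
  exact ⟨a, hTS a.2, φ, hφ, (continuous_subtype_val.tendsto a).comp ha⟩

theorem integral_monoidHom_circle_eq_zero {X : Type*} [Group X] [MeasurableSpace X]
    [MeasurableMul X] (μ : Measure X) [μ.IsMulLeftInvariant] {χ : X →* Circle} (hχ : χ ≠ 1) :
    ∫ x, (χ x : ℂ) ∂μ = 0 := by
  obtain ⟨x₁, hx₁⟩ := DFunLike.ne_iff.1 hχ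
  have h := integral_mul_left_eq_self (μ := μ) (fun x ↦ (χ x : ℂ)) x₁
  simp only [map_mul, Circle.coe_mul, integral_const_mul] at h
  have hx₁' : (χ x₁ : ℂ) - 1 ≠ 0 := sub_ne_zero.2 (by rwa [Ne, Circle.coe_eq_one])
  exact (mul_eq_zero.1 (by linear_combination h)).resolve_left hx₁'

theorem eventually_eq_of_tendsto_pChar {X : Type*} [Group X] [TopologicalSpace X]
    [IsTopologicalGroup X] [CompactSpace X] {χ : ℕ → X → Circle} {ψ : X → Circle}
    (hχ : ∀ n, χ n ∈ pChar X) (hψ : ψ ∈ pChar X) (h : Tendsto χ atTop (𝓝 ψ)) :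
    ∀ᶠ n in atTop, χ n = ψ := by
  borelize X
  let μ := Measure.haarMeasure (⊤ : TopologicalSpace.PositiveCompacts X)
  let d : ℕ → X →* Circle := fun n ↦ MonoidHom.mk' (fun x ↦ χ n x * (ψ x)⁻¹) fun x y ↦ by
    rw [(hχ n).2, hψ.2, mul_inv]; exact mul_mul_mul_comm _ _ _ _
  -- By dominated convergence the integrals of `χ n / ψ` tend to `μ univ ≠ 0`, but they vanish
  -- whenever `χ n ≠ ψ`.
  have hlim : Tendsto (fun n ↦ ∫ x, (d n x : ℂ) ∂μ) atTop (𝓝 (∫ _, (1 : ℂ) ∂μ)) := by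
    refine tendsto_integral_of_dominated_convergence (fun _ ↦ 1) (fun n ↦ ?_)
      (integrable_const 1) (fun n ↦ .of_forall fun x ↦ (Circle.norm_coe _).le)
      (.of_forall fun x ↦ ?_)
    · exact (continuous_subtype_val.comp ((hχ n).1.mul hψ.1.inv)).aestronglyMeasurable
    · have := (tendsto_pi_nhds.1 h x).mul_const (ψ x)⁻¹
      rw [mul_inv_cancel] at this
      exact (continuous_subtype_val.tendsto 1).comp this
  have hμ : ∫ _, (1 : ℂ) ∂μ ≠ 0 := by
    have : μ univ = 1 := by
      rw [← TopologicalSpace.PositiveCompacts.coe_top (α := X)]; exact Measure.haarMeasure_self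
    simp [Measure.real, this]
  filter_upwards [hlim.eventually_ne hμ] with n hn
  by_contra hne
  refine hn (integral_monoidHom_circle_eq_zero μ fun h1 ↦ hne (funext fun x ↦ ?_))
  exact mul_inv_eq_one.1 (DFunLike.congr_fun h1 x)

theorem IsCompact.finite_of_subset_pChar {X : Type*} [Group X] [TopologicalSpace X]
    [IsTopologicalGroup X] [CompactSpace X] {S : Set (X → Circle)} (hS : IsCompact S)
    (hSX : S ⊆ pChar X) : S.Finite := by
  refine not_infinite.1 fun hinf ↦ ?_
  let f : ℕ → X → Circle := fun n ↦ hinf.natEmbedding S n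
  have hf : f.Injective := Subtype.val_injective.comp (hinf.natEmbedding S).injective
  obtain ⟨ψ, hψ, φ, hφ, hlim⟩ := hS.isSeqCompact_of_forall_continuous (fun g hg ↦ (hSX hg).1)
    fun n ↦ (hinf.natEmbedding S n).2
  obtain ⟨N, hN⟩ := eventually_atTop.1
    (eventually_eq_of_tendsto_pChar (fun n ↦ hSX (hinf.natEmbedding S (φ n)).2) (hSX hψ) hlim)
  exact (hφ (Nat.lt_succ_self N)).ne (hf ((hN N le_rfl).trans (hN (N + 1) N.le_succ).symm))

theorem stmt_15_general {G : Type*} [CommGroup G] [TopologicalSpace G]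
    (hpsc : ∀ f : G → ℝ, Continuous f → ∃ C : ℝ, ∀ x : G, |f x| ≤ C) :
    ∀ K : Set ↥(pChar G), IsCompact K → K.Finite := by
  intro K hK
  let ev : G →* (K → Circle) :=
    MonoidHom.mk' (fun g χ ↦ χ.1.1 g) fun g h ↦ funext fun χ ↦ χ.1.2.2 g h
  let X := ev.range.topologicalClosure
  have : CompactSpace X :=
    isCompact_iff_compactSpace.1 ev.range.isClosed_topologicalClosure.isCompact
  let ι : G → X := fun g ↦ ⟨ev g, ev.range.le_topologicalClosure ⟨g, rfl⟩⟩
  have hι : GδDenseRange ι := IsPseudocompact.gδDenseRange hpsc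
    ((continuous_pi fun χ ↦ χ.1.2.1).subtype_mk _)
    (IsInducing.subtypeVal.dense_iff.2 fun x ↦ by rw [← range_comp]; exact x.2)
  let ext : K → X → Circle := fun χ x ↦ x.1 χ
  have hext : range ext ⊆ pChar X := by
    rintro _ ⟨χ, rfl⟩
    exact ⟨(continuous_apply χ).comp continuous_subtype_val, fun _ _ ↦ rfl⟩
  have hextK : IsCompact ((· ∘ ι) '' range ext) := by
    have : CompactSpace K := isCompact_iff_compactSpace.1 hK
    rw [← range_comp]
    exact isCompact_range (continuous_subtype_val.comp continuous_subtype_val)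
  have hinj : ext.Injective := fun χ χ' h ↦
    Subtype.ext (Subtype.ext (funext fun g ↦ congrFun h (ι g)))
  have hclosed : IsClosed (range ext) :=
    isClosed_of_isCompact_image_comp hι (fun f hf ↦ (hext hf).1) hextK
  exact finite_coe_iff.1 ((finite_range_iff hinj).1 (hclosed.isCompact.finite_of_subset_pChar hext))

/-- If `G` is an infinite pseudocompact Hausdorff topological abelian group (every
continuous real-valued function on `G` is bounded), then every compact subset of the dual
group `G_p^∧` is finite. -/
theorem stmt_15 {G : Type*} [CommGroup G] [TopologicalSpace G] [IsTopologicalGroup G]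
    [T2Space G] [Infinite G]
    (hpsc : ∀ f : G → ℝ, Continuous f → ∃ C : ℝ, ∀ x : G, |f x| ≤ C) :
    ∀ K : Set ↥(pChar G), IsCompact K → K.Finite :=
  stmt_15_general hpsc
end

section
/- Let (n_k)_{k∈ℕ} be a strictly increasing sequence of positive integers and let C = {x ∈ T : x^{n_k} → 1 as k → ∞} be the corresponding characterized subgroup of the circle group T. Then the index of C in T is uncountable; i.e., the quotient group T/C is uncountable. -/
/-!
If `C` had countable index, its countably many cosets would cover `𝕋`, so the Borel set `C` would
have positive Haar measure; by Steinhaus' theorem it would be open, hence clopen, hence all of the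
connected group `𝕋`. Then `x ^ n_k → 1` for every `x`, and dominated convergence gives
`∫ x ^ n_k → μ 𝕋 ≠ 0`, whereas `x ↦ x ^ m` is a nontrivial character for `m ≠ 0`, so its
integral vanishes.
-/

open Filter Topology Set

/-- The characterized subgroup `C_B` of the circle group determined by a sequence
`(n_k)` of integers: all `x ∈ 𝕋` with `x ^ n_k → 1` as `k → ∞`. -/
noncomputable def charSubgroup (n : ℕ → ℕ) : Subgroup Circle where
  carrier := {x : Circle | Tendsto (fun k => x ^ n k) atTop (𝓝 1)}
  one_mem' := by simp only [Set.mem_setOf_eq, one_pow]; exact tendsto_const_nhds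
  mul_mem' := by
    intro a b ha hb
    simpa [mul_pow] using ha.mul hb
  inv_mem' := by
    intro a ha
    simpa [inv_pow] using ha.inv

open MeasureTheory

namespace Subgroup

variable {G : Type*} [Group G] [MeasurableSpace G] [MeasurableMul G]

theorem measure_ne_zero_of_countable_quotient (μ : Measure G) [μ.IsMulLeftInvariant] [NeZero μ]
    (H : Subgroup G) [Countable (G ⧸ H)] : μ H ≠ 0 := by
  intro hH
  have hcover : ⋃ q : G ⧸ H, (q.out⁻¹ * ·) ⁻¹' (H : Set G) = univ :=
    eq_univ_of_forall fun x => mem_iUnion.2 ⟨x, QuotientGroup.eq.mp (QuotientGroup.out_eq' _)⟩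
  have huniv : μ univ = 0 := by
    rw [← hcover, measure_iUnion_null_iff]
    intro q
    rwa [measure_preimage_mul]
  exact NeZero.ne μ (Measure.measure_univ_eq_zero.mp huniv)

variable [TopologicalSpace G] [IsTopologicalGroup G] [BorelSpace G] [LocallyCompactSpace G]

theorem isOpen_of_countable_quotient (μ : Measure G) [μ.IsHaarMeasure] [μ.InnerRegular]
    {H : Subgroup G} (hH : MeasurableSet (H : Set G)) [Countable (G ⧸ H)] : IsOpen (H : Set G) := by
  have hpos : 0 < μ H := pos_iff_ne_zero.2 (H.measure_ne_zero_of_countable_quotient μ)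
  refine H.isOpen_of_mem_nhds (mem_of_superset (μ.div_mem_nhds_one_of_haar_pos _ hH hpos) ?_)
  rintro _ ⟨a, ha, b, hb, rfl⟩
  exact div_mem ha hb

theorem eq_top_of_countable_quotient [ConnectedSpace G] (μ : Measure G) [μ.IsHaarMeasure]
    [μ.InnerRegular] {H : Subgroup G} (hH : MeasurableSet (H : Set G)) [Countable (G ⧸ H)] :
    H = ⊤ := by
  have hopen := H.isOpen_of_countable_quotient μ hH
  rw [← coe_eq_univ]
  exact (OpenSubgroup.isClopen ⟨H, hopen⟩).eq_univ ⟨1, H.one_mem⟩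

end Subgroup

theorem MonoidHom.integral_eq_zero_of_ne_one {G : Type*} [Group G] [MeasurableSpace G]
    [MeasurableMul G] (μ : Measure G) [μ.IsMulLeftInvariant] (χ : G →* ℂ) {g : G} (hg : χ g ≠ 1) :
    ∫ x, χ x ∂μ = 0 := by
  have h := integral_mul_left_eq_self (μ := μ) (fun x => χ x) g
  simp only [map_mul, integral_const_mul] at h
  have : (χ g - 1) * ∫ x, χ x ∂μ = 0 := by rw [sub_mul, h, one_mul, sub_self]
  exact (mul_eq_zero.mp this).resolve_left (sub_ne_zero.mpr hg)

theorem Circle.exists_pow_ne_one {m : ℕ} (hm : m ≠ 0) : ∃ x : Circle, x ^ m ≠ 1 := by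
  refine ⟨Circle.exp (Real.pi / m), ?_⟩
  rw [← Circle.exp_natCast_mul, mul_div_cancel₀ _ (Nat.cast_ne_zero.2 hm)]
  exact Circle.exp_pi_ne_one

theorem measurableSet_charSubgroup [MeasurableSpace Circle] [BorelSpace Circle] (n : ℕ → ℕ) :
    MeasurableSet (charSubgroup n : Set Circle) :=
  measurableSet_tendsto (𝓝 1) fun k => (continuous_pow (n k)).measurable

theorem charSubgroup_ne_top {n : ℕ → ℕ} (hpos : ∀ k, 0 < n k) : charSubgroup n ≠ ⊤ := by
  borelize Circle
  intro htop
  set μ : Measure Circle := Measure.haar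
  have hzero (k : ℕ) : ∫ x : Circle, ((x ^ n k : Circle) : ℂ) ∂μ = 0 := by
    obtain ⟨g, hg⟩ := Circle.exists_pow_ne_one (hpos k).ne'
    exact (Circle.coeHom.comp (powMonoidHom (n k))).integral_eq_zero_of_ne_one μ
      (g := g) fun h => hg (Circle.coe_eq_one.mp h)
  have hlim : Tendsto (fun k => ∫ x : Circle, ((x ^ n k : Circle) : ℂ) ∂μ) atTop
      (𝓝 (∫ _ : Circle, ((1 : Circle) : ℂ) ∂μ)) := by
    refine tendsto_integral_of_dominated_convergence 1 (fun k => by fun_prop) (integrable_const 1)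
      (fun k => .of_forall fun x => by simp [Circle.norm_coe]) (.of_forall fun x => ?_)
    have hx : x ∈ charSubgroup n := htop ▸ Subgroup.mem_top x
    exact (continuous_subtype_val.tendsto 1).comp hx
  simp only [hzero, integral_const, Circle.coe_one, Complex.real_smul, mul_one] at hlim
  exact measureReal_univ_ne_zero <|
    Complex.ofReal_eq_zero.mp (tendsto_nhds_unique hlim tendsto_const_nhds)

theorem stmt_19_general (n : ℕ → ℕ) (hpos : ∀ k : ℕ, 0 < n k) :
    Uncountable (Circle ⧸ charSubgroup n) := by
  borelize Circle
  rw [← not_countable_iff]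
  intro _
  exact charSubgroup_ne_top hpos
    ((charSubgroup n).eq_top_of_countable_quotient Measure.haar (measurableSet_charSubgroup n))

/-- If `(n_k)` is a strictly increasing sequence of positive integers and `C ≤ 𝕋` is the
corresponding characterized subgroup `{x : x ^ n_k → 1}`, then the index of `C` in `𝕋` is
uncountable, i.e. the quotient group `𝕋 / C` is uncountable. -/
theorem stmt_19 (n : ℕ → ℕ) (hmono : StrictMono n) (hpos : ∀ k : ℕ, 0 < n k) :
    Uncountable (Circle ⧸ charSubgroup n) :=
  stmt_19_general n hpos
end
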